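/- Let G be a finite simple graph, let R and S be disjoint subsets of V(G), and let T = R ∪ S. Let τ be a T-type, let B_T ⊆ T, and let C_T ⊆ T be an independent set of G[T] with |C_T ∩ B_T| ≤ 1 that is valid relative to B_T and has T-type τ relative to B_T. Then there exist an R-type ρ and an S-type σ that are compatible such that C_T ∩ R is an independent set of G[R] that is valid relative to B_T ∩ R and has R-type ρ relative to B_T ∩ R, C_T ∩ S is an independent set of G[S] that is valid relative to B_T ∩ S and has S-type σ relative to B_T ∩ S, and moreover τ is the merge type of ρ and σ. -/

import Mathlib

open scoped Classical

namespace BCol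

/-- The three possible descriptions of a color class on an equivalence class:
`none`, `contains`, or `demand`. -/
inductive Desc where
  | none
  | contains
  | demand
deriving DecidableEq

variable {V : Type*}

/-- The neighborhood of `v` outside of `U`, i.e. `N_G(v) \ U`. -/
def extN (G : SimpleGraph V) (U : Set V) (v : V) : Set V := G.neighborSet v \ U

/-- The `~_U`-equivalence class of `u`: the vertices of `U` with the same
neighborhood outside of `U` as `u`. -/
def cls (G : SimpleGraph V) (U : Set V) (u : V) : Set V :=
  {v | v ∈ U ∧ extN G U v = extN G U u}

/-- The set of equivalence classes `U/~_U`. -/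
def eqClasses (G : SimpleGraph V) (U : Set V) : Set (Set V) :=
  {Q | ∃ u ∈ U, Q = cls G U u}

/-- The equivalence classes of `~_U`, as a type. -/
abbrev Classes (G : SimpleGraph V) (U : Set V) := {Q // Q ∈ eqClasses G U}

/-- A `U`-type: a pair of a map `U/~_U → {none, contains, demand}` and a bit. -/
abbrev UType (G : SimpleGraph V) (U : Set V) := (Classes G U → Desc) × Bool

/-- The neighborhood of `v` in the induced subgraph `G[U]`. -/
def indN (G : SimpleGraph V) (U : Set V) (v : V) : Set V := G.neighborSet v ∩ U

/-- `C` is an independent set of the induced subgraph `G[U]`. -/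
def IndepIn (G : SimpleGraph V) (U C : Set V) : Prop :=
  C ⊆ U ∧ ∀ u ∈ C, ∀ v ∈ C, ¬ G.Adj u v

/-- The `desc`-component of the `U`-type of the color class `C` relative to the set `B`
of partial `b`-vertices. -/
noncomputable def descOf (G : SimpleGraph V) (U B C : Set V) (Q : Classes G U) : Desc :=
  if (Q.1 ∩ C).Nonempty then Desc.contains
  else if ∃ v ∈ B ∩ Q.1, indN G U v ∩ C = ∅ then Desc.demand
  else Desc.none

/-- The `U`-type of the color class `C` relative to the set `B` of partial `b`-vertices. -/
noncomputable def typeOf (G : SimpleGraph V) (U B C : Set V) : UType G U :=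
  (descOf G U B C, if (C ∩ B).Nonempty then true else false)

/-- `C` is valid relative to `B`: there is no class `Q ∈ U/~_U` intersecting `C` such
that some `v ∈ B ∩ Q` has closed neighborhood in `G[U]` disjoint from `C`. -/
def ValidClass (G : SimpleGraph V) (U B C : Set V) : Prop :=
  ¬ ∃ Q ∈ eqClasses G U, (Q ∩ C).Nonempty ∧
      ∃ v ∈ B ∩ Q, (insert v (indN G U v)) ∩ C = ∅

/-- `Q_R Q_S ∈ E(H)`: every vertex of `Q_R` is adjacent to every vertex of `Q_S`. -/
def OpEdge (G : SimpleGraph V) (QR QS : Set V) : Prop :=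
  ∀ u ∈ QR, ∀ v ∈ QS, G.Adj u v

/-- An `R`-type `ρ` and an `S`-type `σ` are compatible. -/
def CompatibleTypes (G : SimpleGraph V) (R S : Set V)
    (ρ : UType G R) (σ : UType G S) : Prop :=
  (¬ (ρ.2 = true ∧ σ.2 = true)) ∧
  (¬ ∃ (QR : Classes G R) (QS : Classes G S),
      OpEdge G QR.1 QS.1 ∧ ρ.1 QR = Desc.contains ∧ σ.1 QS = Desc.contains) ∧
  (∀ Q : Classes G (R ∪ S),
    ((∃ QR : Classes G R, QR.1 ⊆ Q.1 ∧ ρ.1 QR = Desc.contains) ∨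
     (∃ QS : Classes G S, QS.1 ⊆ Q.1 ∧ σ.1 QS = Desc.contains)) →
    ((∀ QR : Classes G R, QR.1 ⊆ Q.1 → ρ.1 QR = Desc.demand →
        ∃ QS : Classes G S, σ.1 QS = Desc.contains ∧ OpEdge G QR.1 QS.1) ∧
     (∀ QS : Classes G S, QS.1 ⊆ Q.1 → σ.1 QS = Desc.demand →
        ∃ QR : Classes G R, ρ.1 QR = Desc.contains ∧ OpEdge G QR.1 QS.1)))

/-- The merge type of an `R`-type `ρ` and an `S`-type `σ`. -/
noncomputable def mergeType (G : SimpleGraph V) (R S : Set V)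
    (ρ : UType G R) (σ : UType G S) : UType G (R ∪ S) :=
  (fun Q =>
    if (∃ QR : Classes G R, QR.1 ⊆ Q.1 ∧ ρ.1 QR = Desc.contains) ∨
       (∃ QS : Classes G S, QS.1 ⊆ Q.1 ∧ σ.1 QS = Desc.contains) then
      Desc.contains
    else if (∃ QR : Classes G R, QR.1 ⊆ Q.1 ∧ ρ.1 QR = Desc.demand ∧
              ∀ QS : Classes G S, OpEdge G QR.1 QS.1 → σ.1 QS ≠ Desc.contains) ∨
            (∃ QS : Classes G S, QS.1 ⊆ Q.1 ∧ σ.1 QS = Desc.demand ∧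
              ∀ QR : Classes G R, OpEdge G QR.1 QS.1 → ρ.1 QR ≠ Desc.contains) then
      Desc.demand
    else Desc.none,
   ρ.2 || σ.2)

/-- `((C_1, …, C_k), B)` is a partial `b`-coloring of `G[U]` with `k` colors:
the `C_i` partition `U` into independent sets of `G[U]`, `B ⊆ U`, and each color class
contains at most one vertex of `B`. -/
def IsPartialBColoring (G : SimpleGraph V) (U : Set V) {k : ℕ}
    (C : Fin k → Set V) (B : Set V) : Prop :=
  (⋃ i, C i) = U ∧ (Pairwise fun i j => Disjoint (C i) (C j)) ∧
  (∀ i, IndepIn G U (C i)) ∧ B ⊆ U ∧ ∀ i, (C i ∩ B).Subsingleton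

/-- A valid partial `b`-coloring of `G[U]`: every color class is valid relative to `B`. -/
def IsValidPartialBColoring (G : SimpleGraph V) (U : Set V) {k : ℕ}
    (C : Fin k → Set V) (B : Set V) : Prop :=
  IsPartialBColoring G U C B ∧ ∀ i, ValidClass G U B (C i)

/-- The `U`-signature of the partial `b`-coloring `(C, B)`: to each `U`-type `τ` it
assigns the number of color classes whose `U`-type relative to `B` is `τ`. -/
noncomputable def sigOf (G : SimpleGraph V) (U : Set V) {k : ℕ}
    (C : Fin k → Set V) (B : Set V) : UType G U → ℕ :=
  fun τ => Nat.card {i : Fin k // typeOf G U B (C i) = τ}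

/-- `σ` is a `U`-signature for `k` colors: the values of `σ` sum up to `k`. -/
def IsSignature (G : SimpleGraph V) (U : Set V) (k : ℕ) (σ : UType G U → ℕ) : Prop :=
  ∑ᶠ τ, σ τ = k

/-- A triple `(σT, σR, σS)` of signatures is compatible: there is an assignment `f` of
natural numbers to the edges of the merge skeleton (i.e. to the compatible pairs of an
`R`-type and an `S`-type) such that the sums of `f` over the edges incident to each
`R`-type `ρ`, to each `S`-type `σ`, and over the edges labeled by each merge type `τ`
are `σR ρ`, `σS σ`, and `σT τ`, respectively. -/
def CompatibleSignatures (G : SimpleGraph V) (R S : Set V)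
    (σT : UType G (R ∪ S) → ℕ) (σR : UType G R → ℕ) (σS : UType G S → ℕ) : Prop :=
  ∃ f : UType G R × UType G S → ℕ,
    (∀ p, ¬ CompatibleTypes G R S p.1 p.2 → f p = 0) ∧
    (∀ ρ, ∑ᶠ σ, f (ρ, σ) = σR ρ) ∧
    (∀ σ, ∑ᶠ ρ, f (ρ, σ) = σS σ) ∧
    (∀ τ, ∑ᶠ p ∈ {p : UType G R × UType G S | mergeType G R S p.1 p.2 = τ}, f p = σT τ)

/-!
Restricting `C` to `R` and to `S` loses no information: a vertex of `R` has the same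
neighbours outside `R` as every vertex of its `R`-class, so `C ∩ S` meets the
`G[T]`-neighbourhood of a vertex `v ∈ R` exactly when some `S`-class of type `contains`
is joined to the `R`-class of `v` in the operator graph `H`. Hence the `demand` entries of
the `T`-type are the `demand` entries of the two sides that are not met across `H`, and
validity of `C` in `G[T]` is exactly what makes the demands inside a class of type
`contains` met across `H`.
-/

section

variable {G : SimpleGraph V}

lemma extN_eq_extN_diff {U W : Set V} (h : U ⊆ W) (v : V) :
    extN G W v = extN G U v \ W := by
  simp only [extN, Set.sdiff_sdiff, Set.union_eq_right.mpr h]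

lemma mem_cls_self {U : Set V} {u : V} (hu : u ∈ U) : u ∈ cls G U u := ⟨hu, rfl⟩

lemma cls_subset_cls {U W : Set V} (h : U ⊆ W) (v : V) : cls G U v ⊆ cls G W v := by
  rintro y ⟨hyU, hye⟩
  exact ⟨h hyU, by rw [extN_eq_extN_diff h, extN_eq_extN_diff h, hye]⟩

lemma cls_eq_of_mem {U : Set V} {u x : V} (hx : x ∈ cls G U u) : cls G U x = cls G U u := by
  ext y
  exact and_congr_right fun _ => by rw [hx.2]

variable (G) in
def classOf {U : Set V} {u : V} (hu : u ∈ U) : Classes G U := ⟨cls G U u, u, hu, rfl⟩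

lemma Classes.eq_cls_of_mem {U : Set V} (Q : Classes G U) {v : V} (hv : v ∈ Q.1) :
    Q.1 = cls G U v := by
  obtain ⟨u, -, hQ⟩ := Q.2
  rw [hQ] at hv ⊢
  exact (cls_eq_of_mem hv).symm

lemma cls_subset_of_mem {U W : Set V} (hUW : U ⊆ W) (Q : Classes G W) {x : V}
    (hxQ : x ∈ Q.1) : cls G U x ⊆ Q.1 :=
  Q.eq_cls_of_mem hxQ ▸ cls_subset_cls hUW x

lemma adj_of_mem_cls {U : Set V} {u v w : V} (huv : u ∈ cls G U v) (hvw : G.Adj v w)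
    (hw : w ∉ U) : G.Adj u w :=
  (show w ∈ extN G U u from huv.2 ▸ ⟨hvw, hw⟩).1

lemma opEdge_comm {P Q : Set V} : OpEdge G P Q ↔ OpEdge G Q P :=
  ⟨fun h u hu v hv => (h v hv u hu).symm, fun h u hu v hv => (h v hv u hu).symm⟩

lemma opEdge_cls_of_adj {A A' : Set V} (hAA' : Disjoint A A') {v w : V} (hw : w ∈ A')
    (hvw : G.Adj v w) : OpEdge G (cls G A v) (cls G A' w) := by
  intro u hu z hz
  have huw : G.Adj u w := adj_of_mem_cls hu hvw (hAA'.ne_of_mem · hw rfl)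
  exact (adj_of_mem_cls hz huw.symm (hAA'.ne_of_mem hu.1 · rfl)).symm

lemma descOf_eq_contains_iff {U B C : Set V} (Q : Classes G U) :
    descOf G U B C Q = Desc.contains ↔ (Q.1 ∩ C).Nonempty := by
  unfold descOf
  split_ifs <;> simp_all

lemma descOf_eq_demand_iff {U B C : Set V} (Q : Classes G U) :
    descOf G U B C Q = Desc.demand ↔
      ¬(Q.1 ∩ C).Nonempty ∧ ∃ v ∈ B ∩ Q.1, indN G U v ∩ C = ∅ := by
  unfold descOf
  split_ifs <;> simp_all

lemma descOf_classOf_eq_contains {U B C : Set V} {w : V} (hw : w ∈ U) (hwC : w ∈ C) :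
    descOf G U B C (classOf G hw) = Desc.contains :=
  (descOf_eq_contains_iff _).mpr ⟨w, mem_cls_self hw, hwC⟩

lemma typeOf_snd_eq_true_iff {U B C : Set V} :
    (typeOf G U B C).2 = true ↔ (C ∩ B).Nonempty := by
  simp [typeOf]

lemma IndepIn.inter {W C : Set V} (hC : IndepIn G W C) (U : Set V) : IndepIn G U (C ∩ U) :=
  ⟨Set.inter_subset_right, fun u hu v hv => hC.2 u hu.1 v hv.1⟩

/-- A neighbour `w ∉ U` of the violating vertex `v` is also a neighbour of the vertex
`x ∈ C` of its `U`-class, which independence of `C` forbids. -/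
lemma ValidClass.inter {U W B C : Set V} (hval : ValidClass G W B C) (hC : IndepIn G W C)
    (hUW : U ⊆ W) : ValidClass G U (B ∩ U) (C ∩ U) := by
  rintro ⟨Q, ⟨u, -, rfl⟩, ⟨x, hxQ, hxC, -⟩, v, ⟨⟨hvB, hvU⟩, hvQ⟩, hve⟩
  rw [← cls_eq_of_mem hvQ] at hxQ
  refine hval ⟨cls G W v, ⟨v, hUW hvU, rfl⟩, ⟨x, cls_subset_cls hUW v hxQ, hxC⟩,
    v, ⟨hvB, mem_cls_self (hUW hvU)⟩, Set.eq_empty_iff_forall_notMem.mpr ?_⟩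
  rintro w ⟨rfl | hw, hwC⟩
  · exact hve.subset ⟨Set.mem_insert w _, hwC, hvU⟩
  · by_cases hwU : w ∈ U
    · exact hve.subset ⟨Set.mem_insert_of_mem v ⟨hw.1, hwU⟩, hwC, hwU⟩
    · exact hC.2 x hxC w hwC (adj_of_mem_cls hxQ hw.1 hwU)

lemma exists_descOf_eq_contains_iff {U W B C : Set V} (hUW : U ⊆ W) (Q : Classes G W) :
    (∃ QU : Classes G U, QU.1 ⊆ Q.1 ∧ descOf G U B (C ∩ U) QU = Desc.contains) ↔
      (Q.1 ∩ (C ∩ U)).Nonempty := by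
  refine ⟨fun ⟨QU, hsub, hc⟩ => ?_, fun ⟨x, hxQ, hxC, hxU⟩ => ?_⟩
  · obtain ⟨x, hxQ, hxC⟩ := (descOf_eq_contains_iff QU).mp hc
    exact ⟨x, hsub hxQ, hxC⟩
  · exact ⟨classOf G hxU, cls_subset_of_mem hUW Q hxQ,
      descOf_classOf_eq_contains hxU ⟨hxC, hxU⟩⟩

lemma inter_nonempty_iff_exists_contains {R S B C : Set V} (hC : C ⊆ R ∪ S)
    (Q : Classes G (R ∪ S)) :
    (Q.1 ∩ C).Nonempty ↔
      (∃ QR : Classes G R, QR.1 ⊆ Q.1 ∧ descOf G R (B ∩ R) (C ∩ R) QR = Desc.contains) ∨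
      (∃ QS : Classes G S, QS.1 ⊆ Q.1 ∧ descOf G S (B ∩ S) (C ∩ S) QS = Desc.contains) := by
  rw [exists_descOf_eq_contains_iff Set.subset_union_left,
    exists_descOf_eq_contains_iff Set.subset_union_right, ← Set.union_nonempty,
    ← Set.inter_union_distrib_left, ← Set.inter_union_distrib_left, Set.inter_eq_left.mpr hC]

lemma indN_union_inter_eq_empty_iff {A A' C : Set V} (hAA' : Disjoint A A') {v : V}
    (hv : v ∈ A) (B' : Set V) :
    indN G (A ∪ A') v ∩ C = ∅ ↔
      indN G A v ∩ (C ∩ A) = ∅ ∧ ∀ Q' : Classes G A',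
        OpEdge G (cls G A v) Q'.1 → descOf G A' B' (C ∩ A') Q' ≠ Desc.contains := by
  simp only [Set.eq_empty_iff_forall_notMem, ne_eq, descOf_eq_contains_iff]
  constructor
  · refine fun h => ⟨fun w ⟨⟨hvw, _⟩, hwC, hwA⟩ => h w ⟨⟨hvw, Or.inl hwA⟩, hwC⟩, ?_⟩
    rintro Q' hE ⟨w, hwQ', hwC, hwA'⟩
    exact h w ⟨⟨hE v (mem_cls_self hv) w hwQ', Or.inr hwA'⟩, hwC⟩
  · rintro ⟨hA, hA'⟩ w ⟨⟨hvw, hwA | hwA'⟩, hwC⟩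
    · exact hA w ⟨⟨hvw, hwA⟩, hwC, hwA⟩
    · exact hA' (classOf G hwA') (opEdge_cls_of_adj hAA' hwA' hvw)
        ⟨w, mem_cls_self hwA', hwC, hwA'⟩

lemma exists_demand_iff_exists_unmet_demand {A A' W B C : Set V} (hAA' : Disjoint A A')
    (hW : A ∪ A' = W) (Q : Classes G W) (hQC : Q.1 ∩ C = ∅) :
    (∃ v ∈ (B ∩ A) ∩ Q.1, indN G W v ∩ C = ∅) ↔
      ∃ QA : Classes G A, QA.1 ⊆ Q.1 ∧ descOf G A (B ∩ A) (C ∩ A) QA = Desc.demand ∧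
        ∀ Q' : Classes G A', OpEdge G QA.1 Q'.1 →
          descOf G A' (B ∩ A') (C ∩ A') Q' ≠ Desc.contains := by
  subst hW
  constructor
  · rintro ⟨v, ⟨hvB, hvQ⟩, hv⟩
    obtain ⟨hvA, hvA'⟩ := (indN_union_inter_eq_empty_iff hAA' hvB.2 _).mp hv
    have hsub := cls_subset_of_mem Set.subset_union_left Q hvQ
    refine ⟨classOf G hvB.2, hsub, (descOf_eq_demand_iff _).mpr ⟨?_, v, ⟨hvB,
      mem_cls_self hvB.2⟩, hvA⟩, hvA'⟩
    rintro ⟨x, hx, hxC, -⟩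
    exact hQC.subset ⟨hsub hx, hxC⟩
  · rintro ⟨QA, hsub, hdem, hE⟩
    obtain ⟨-, v, ⟨hvB, hvQA⟩, hvA⟩ := (descOf_eq_demand_iff QA).mp hdem
    rw [QA.eq_cls_of_mem hvQA] at hE
    exact ⟨v, ⟨hvB, hsub hvQA⟩, (indN_union_inter_eq_empty_iff hAA' hvB.2 _).mpr ⟨hvA, hE⟩⟩

/-- Validity of `C` at the class `Q` gives the demanding vertex a neighbour in `C`, which
cannot lie in `A`. -/
lemma exists_contains_of_demand {A A' W B C : Set V} (hAA' : Disjoint A A')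
    (hW : A ∪ A' = W) (hval : ValidClass G W B C) (Q : Classes G W)
    (hQC : (Q.1 ∩ C).Nonempty) (QA : Classes G A) (hsub : QA.1 ⊆ Q.1)
    (hdem : descOf G A (B ∩ A) (C ∩ A) QA = Desc.demand) :
    ∃ Q' : Classes G A', descOf G A' (B ∩ A') (C ∩ A') Q' = Desc.contains ∧
      OpEdge G QA.1 Q'.1 := by
  subst hW
  obtain ⟨hne, v, ⟨hvB, hvQA⟩, hvA⟩ := (descOf_eq_demand_iff QA).mp hdem
  have hvC : v ∉ C := fun hvC => hne ⟨v, hvQA, hvC, hvB.2⟩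
  have hmet : indN G (A ∪ A') v ∩ C ≠ ∅ := by
    rw [← Set.insert_inter_of_notMem hvC]
    exact fun h => hval ⟨Q.1, Q.2, hQC, v, ⟨hvB.1, hsub hvQA⟩, h⟩
  rw [Ne, indN_union_inter_eq_empty_iff hAA' hvB.2 (B ∩ A')] at hmet
  push Not at hmet
  obtain ⟨Q', hE, hc⟩ := hmet hvA
  exact ⟨Q', hc, QA.eq_cls_of_mem hvQA ▸ hE⟩

theorem compatibleTypes_typeOf_inter {R S B C : Set V} (hRS : Disjoint R S)
    (hC : IndepIn G (R ∪ S) C) (hCB : (C ∩ B).Subsingleton)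
    (hval : ValidClass G (R ∪ S) B C) :
    CompatibleTypes G R S (typeOf G R (B ∩ R) (C ∩ R)) (typeOf G S (B ∩ S) (C ∩ S)) := by
  refine ⟨?_, ?_, fun Q hQ => ?_⟩
  · rintro ⟨hR, hS⟩
    obtain ⟨x, ⟨hxC, hxR⟩, hxB, -⟩ := typeOf_snd_eq_true_iff.mp hR
    obtain ⟨y, ⟨hyC, hyS⟩, hyB, -⟩ := typeOf_snd_eq_true_iff.mp hS
    exact hRS.ne_of_mem hxR hyS (hCB ⟨hxC, hxB⟩ ⟨hyC, hyB⟩)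
  · rintro ⟨QR, QS, hE, hcR, hcS⟩
    obtain ⟨x, hxQ, hxC, -⟩ := (descOf_eq_contains_iff QR).mp hcR
    obtain ⟨y, hyQ, hyC, -⟩ := (descOf_eq_contains_iff QS).mp hcS
    exact hC.2 x hxC y hyC (hE x hxQ y hyQ)
  have hQC : (Q.1 ∩ C).Nonempty := (inter_nonempty_iff_exists_contains hC.1 Q).mpr hQ
  refine ⟨exists_contains_of_demand hRS rfl hval Q hQC, fun QS hsub hdem => ?_⟩
  obtain ⟨QR, hc, hE⟩ :=
    exists_contains_of_demand hRS.symm (Set.union_comm S R) hval Q hQC QS hsub hdem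
  exact ⟨QR, hc, opEdge_comm.mp hE⟩

lemma ite_ite_congr {α : Type*} {p p' q q' : Prop} [Decidable p] [Decidable p'] [Decidable q]
    [Decidable q'] {a b c : α} (hp : p ↔ p') (hq : ¬p → (q ↔ q')) :
    (if p then a else if q then b else c) = if p' then a else if q' then b else c := by
  by_cases h : p
  · simp [h, hp.mp h]
  · simp [h, mt hp.mpr h, hq h]

lemma exists_mem_inter_iff_or {R S X Y : Set V} (hX : X ⊆ R ∪ S) (p : V → Prop) :
    (∃ v ∈ X ∩ Y, p v) ↔ (∃ v ∈ (X ∩ R) ∩ Y, p v) ∨ (∃ v ∈ (X ∩ S) ∩ Y, p v) := by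
  constructor
  · rintro ⟨v, ⟨hvX, hvY⟩, hp⟩
    rcases hX hvX with hvR | hvS
    exacts [Or.inl ⟨v, ⟨⟨hvX, hvR⟩, hvY⟩, hp⟩, Or.inr ⟨v, ⟨⟨hvX, hvS⟩, hvY⟩, hp⟩]
  · rintro (⟨v, ⟨⟨hvX, -⟩, hvY⟩, hp⟩ | ⟨v, ⟨⟨hvX, -⟩, hvY⟩, hp⟩) <;> exact ⟨v, ⟨hvX, hvY⟩, hp⟩

theorem typeOf_union_eq_mergeType {R S B C : Set V} (hRS : Disjoint R S) (hB : B ⊆ R ∪ S)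
    (hC : C ⊆ R ∪ S) :
    typeOf G (R ∪ S) B C =
      mergeType G R S (typeOf G R (B ∩ R) (C ∩ R)) (typeOf G S (B ∩ S) (C ∩ S)) := by
  refine Prod.ext (funext fun Q => ?_) ?_
  · have hcontains := inter_nonempty_iff_exists_contains (B := B) hC Q
    refine ite_ite_congr hcontains fun hQC => ?_
    have hQC' : Q.1 ∩ C = ∅ := Set.not_nonempty_iff_eq_empty.mp hQC
    rw [exists_mem_inter_iff_or hB, exists_demand_iff_exists_unmet_demand hRS rfl Q hQC',
      exists_demand_iff_exists_unmet_demand hRS.symm (Set.union_comm S R) Q hQC']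
    exact or_congr_right <| exists_congr fun _ => and_congr_right fun _ =>
      and_congr_right fun _ => forall_congr' fun _ => imp_congr_left opEdge_comm
  · rw [Bool.eq_iff_iff, mergeType, Bool.or_eq_true, typeOf_snd_eq_true_iff,
      typeOf_snd_eq_true_iff, typeOf_snd_eq_true_iff]
    constructor
    · rintro ⟨x, hxC, hxB⟩
      rcases hC hxC with hx | hx
      exacts [Or.inl ⟨x, ⟨hxC, hx⟩, hxB, hx⟩, Or.inr ⟨x, ⟨hxC, hx⟩, hxB, hx⟩]
    · rintro (⟨x, ⟨hxC, -⟩, hxB, -⟩ | ⟨x, ⟨hxC, -⟩, hxB, -⟩) <;> exact ⟨x, hxC, hxB⟩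

end

theorem split_types_general {V : Type*} (G : SimpleGraph V)
    (R S : Set V) (hRS : Disjoint R S)
    (τ : UType G (R ∪ S)) (BT CT : Set V) (hBT : BT ⊆ R ∪ S)
    (hCTind : IndepIn G (R ∪ S) CT) (hCTB : (CT ∩ BT).Subsingleton)
    (hCTvalid : ValidClass G (R ∪ S) BT CT)
    (hCTtype : typeOf G (R ∪ S) BT CT = τ) :
    ∃ (ρ : UType G R) (σ : UType G S),
      CompatibleTypes G R S ρ σ ∧
      IndepIn G R (CT ∩ R) ∧ ((CT ∩ R) ∩ (BT ∩ R)).Subsingleton ∧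
      ValidClass G R (BT ∩ R) (CT ∩ R) ∧ typeOf G R (BT ∩ R) (CT ∩ R) = ρ ∧
      IndepIn G S (CT ∩ S) ∧ ((CT ∩ S) ∩ (BT ∩ S)).Subsingleton ∧
      ValidClass G S (BT ∩ S) (CT ∩ S) ∧ typeOf G S (BT ∩ S) (CT ∩ S) = σ ∧
      τ = mergeType G R S ρ σ := by
  subst hCTtype
  have hrestrict (A : Set V) : ((CT ∩ A) ∩ (BT ∩ A)).Subsingleton :=
    hCTB.anti (Set.inter_subset_inter Set.inter_subset_left Set.inter_subset_left)
  exact ⟨_, _, compatibleTypes_typeOf_inter hRS hCTind hCTB hCTvalid,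
    hCTind.inter R, hrestrict R, hCTvalid.inter hCTind Set.subset_union_left, rfl,
    hCTind.inter S, hrestrict S, hCTvalid.inter hCTind Set.subset_union_right, rfl,
    typeOf_union_eq_mergeType hRS hBT hCTind.1⟩

/-- Splitting types (Lemma: split). Let `R, S` be disjoint vertex subsets of a finite
graph `G` and `T = R ∪ S`. For every `T`-type `τ`, every `B_T ⊆ T` and every valid
independent color class `C_T ⊆ T` of `G[T]` of `T`-type `τ` relative to `B_T`, there
are a compatible pair of an `R`-type `ρ` and an `S`-type `σ` such that `C_T ∩ R` is a
valid independent color class of `G[R]` of `R`-type `ρ` relative to `B_T ∩ R`,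
`C_T ∩ S` is a valid independent color class of `G[S]` of `S`-type `σ` relative to
`B_T ∩ S`, and `τ` is the merge type of `ρ` and `σ`. -/
theorem split_types {V : Type*} [Fintype V] [DecidableEq V] (G : SimpleGraph V)
    (R S : Set V) (hRS : Disjoint R S)
    (τ : UType G (R ∪ S)) (BT CT : Set V) (hBT : BT ⊆ R ∪ S)
    (hCTind : IndepIn G (R ∪ S) CT) (hCTB : (CT ∩ BT).Subsingleton)
    (hCTvalid : ValidClass G (R ∪ S) BT CT)
    (hCTtype : typeOf G (R ∪ S) BT CT = τ) :
    ∃ (ρ : UType G R) (σ : UType G S),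
      CompatibleTypes G R S ρ σ ∧
      IndepIn G R (CT ∩ R) ∧ ((CT ∩ R) ∩ (BT ∩ R)).Subsingleton ∧
      ValidClass G R (BT ∩ R) (CT ∩ R) ∧ typeOf G R (BT ∩ R) (CT ∩ R) = ρ ∧
      IndepIn G S (CT ∩ S) ∧ ((CT ∩ S) ∩ (BT ∩ S)).Subsingleton ∧
      ValidClass G S (BT ∩ S) (CT ∩ S) ∧ typeOf G S (BT ∩ S) (CT ∩ S) = σ ∧
      τ = mergeType G R S ρ σ :=
  split_types_general G R S hRS τ BT CT hBT hCTind hCTB hCTvalid hCTtype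

end BCol
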